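/- Let C be a locally finite EI category of type A∞ over a field k of characteristic 0, satisfying the transitivity and bijectivity conditions, and fix an object i. Then every kC-submodule of the module M(i) = ⊕_j k C(i,j) (with left action by composition) is finitely generated. -/

import Mathlib

/-- A skeletal locally finite EI category with objects the non-negative
integers and `Hom i j` nonempty iff `i ≤ j`. -/
structure EICat where
  Hom : ℕ → ℕ → Type
  idm : ∀ i, Hom i i
  comp : ∀ {i j l : ℕ}, Hom j l → Hom i j → Hom i l
  id_comp : ∀ {i j : ℕ} (f : Hom i j), comp (idm j) f = f
  comp_id : ∀ {i j : ℕ} (f : Hom i j), comp f (idm i) = f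
  assoc : ∀ {i j l m : ℕ} (f : Hom l m) (g : Hom j l) (h : Hom i j),
    comp (comp f g) h = comp f (comp g h)
  homFinite : ∀ i j, Finite (Hom i j)
  ei : ∀ (i : ℕ) (f : Hom i i), ∃ g : Hom i i, comp f g = idm i ∧ comp g f = idm i
  nonempty_iff : ∀ i j, Nonempty (Hom i j) ↔ i ≤ j

/-- A morphism is an isomorphism. -/
def EICat.IsIso (C : EICat) {i j : ℕ} (f : C.Hom i j) : Prop :=
  ∃ g : C.Hom j i, C.comp f g = C.idm j ∧ C.comp g f = C.idm i

/-- A morphism is unfactorizable. -/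
def EICat.Unfact (C : EICat) {i j : ℕ} (f : C.Hom i j) : Prop :=
  ¬ C.IsIso f ∧ ∀ (l : ℕ) (b₂ : C.Hom i l) (b₁ : C.Hom l j),
    f = C.comp b₁ b₂ → C.IsIso b₁ ∨ C.IsIso b₂

/-- `C` is of type `A∞`: the underlying quiver of unfactorizable morphisms is
`0 → 1 → 2 → ⋯`. -/
def EICat.TypeAInf (C : EICat) : Prop :=
  ∀ i j : ℕ, (∃ f : C.Hom i j, C.Unfact f) ↔ j = i + 1

/-- The transitivity condition: `G_{i+1}` acts transitively on `C(i, i+1)`. -/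
def EICat.TransCond (C : EICat) : Prop :=
  ∀ (i : ℕ) (f g : C.Hom i (i + 1)), ∃ e : C.Hom (i + 1) (i + 1), C.comp e f = g

/-- The chosen morphism `α_{i,j} = α_{j-1} ⋯ α_{i+1} α_i ∈ C(i,j)`, built from a
choice of morphisms `α_j ∈ C(j, j+1)`. -/
def EICat.alph (C : EICat) (α : ∀ j, C.Hom j (j + 1)) (i : ℕ) :
    ∀ {j : ℕ}, i ≤ j → C.Hom i j :=
  fun {j} h => Nat.leRecOn h (fun {n} p => C.comp (α n) p) (C.idm i)

/-- `γ, γ' ∈ C(i,j)` lie in the same `H_{i,j}`-orbit, where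
`H_{i,j} = Stab_{G_j}(α_{i,j})`. -/
def EICat.orbRel (C : EICat) (α : ∀ j, C.Hom j (j + 1)) {i j : ℕ} (hij : i ≤ j)
    (γ γ' : C.Hom i j) : Prop :=
  ∃ h : C.Hom j j, C.comp h (C.alph α i hij) = C.alph α i hij ∧ C.comp h γ = γ'

/-- `δ, δ' ∈ C(i,j+1)` lie in the same `H_{i,j+1}`-orbit, where
`α_{i,j+1} = α_j α_{i,j}`. -/
def EICat.orbRelS (C : EICat) (α : ∀ j, C.Hom j (j + 1)) {i j : ℕ} (hij : i ≤ j)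
    (δ δ' : C.Hom i (j + 1)) : Prop :=
  ∃ h : C.Hom (j + 1) (j + 1),
    C.comp h (C.comp (α j) (C.alph α i hij)) = C.comp (α j) (C.alph α i hij) ∧
    C.comp h δ = δ'

/-- The bijectivity condition: for each `i`, the induced maps
`μ_{i,j} : H_{i,j}\C(i,j) → H_{i,j+1}\C(i,j+1)` are bijective for all
sufficiently large `j`. -/
def EICat.BijCond (C : EICat) (α : ∀ j, C.Hom j (j + 1)) : Prop :=
  ∀ i : ℕ, ∃ N : ℕ, ∀ (j : ℕ) (hij : i ≤ j), N ≤ j →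
    (∀ γ γ' : C.Hom i j,
      C.orbRelS α hij (C.comp (α j) γ) (C.comp (α j) γ') → C.orbRel α hij γ γ') ∧
    (∀ δ : C.Hom i (j + 1), ∃ γ : C.Hom i j, C.orbRelS α hij (C.comp (α j) γ) δ)

/-- A `kC`-module: a (covariant) functor from `C` to `k`-modules. -/
structure CMod (k : Type) [CommRing k] (C : EICat) where
  V : ℕ → Type
  [acg : ∀ i, AddCommGroup (V i)]
  [mod : ∀ i, Module k (V i)]
  act : ∀ {i j : ℕ}, C.Hom i j → V i →ₗ[k] V j
  act_id : ∀ i : ℕ, act (C.idm i) = LinearMap.id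
  act_comp : ∀ {i j l : ℕ} (f : C.Hom j l) (g : C.Hom i j),
    act (C.comp f g) = (act f).comp (act g)

attribute [instance] CMod.acg CMod.mod

variable {k : Type} [CommRing k] {C : EICat}

/-- A family of `k`-submodules `W i ⊆ V i` is a `kC`-submodule if it is closed
under the action of all morphisms of `C`. -/
def CMod.Closed (M : CMod k C) (W : ∀ i, Submodule k (M.V i)) : Prop :=
  ∀ (i j : ℕ) (f : C.Hom i j) (x : M.V i), x ∈ W i → M.act f x ∈ W j

/-- The `kC`-module `M` is finitely generated: there is a finite family of
homogeneous elements contained in no proper `kC`-submodule. -/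
def CMod.FG (M : CMod k C) : Prop :=
  ∃ (n : ℕ) (d : Fin n → ℕ) (v : ∀ m : Fin n, M.V (d m)),
    ∀ W : ∀ i, Submodule k (M.V i), M.Closed W →
      (∀ m : Fin n, v m ∈ W (d m)) → ∀ i, W i = ⊤

/-- A `kC`-submodule `W` of `M` is finitely generated: it contains a finite
family of homogeneous elements not all contained in any smaller
`kC`-submodule. -/
def CMod.SubFG (M : CMod k C) (W : ∀ i, Submodule k (M.V i)) : Prop :=
  ∃ (n : ℕ) (d : Fin n → ℕ) (v : ∀ m : Fin n, M.V (d m)),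
    (∀ m : Fin n, v m ∈ W (d m)) ∧
    ∀ W' : ∀ i, Submodule k (M.V i), M.Closed W' →
      (∀ m : Fin n, v m ∈ W' (d m)) → ∀ i, W i ≤ W' i

/-- The `kC`-module `M` is Noetherian: every `kC`-submodule is finitely
generated. -/
def CMod.Noetherian (M : CMod k C) : Prop :=
  ∀ W : ∀ i, Submodule k (M.V i), M.Closed W → M.SubFG W

/-- The free `kC`-module `M(i) = ⊕_j k C(i,j)`, with morphisms acting by
composition. -/
noncomputable def Mfree (k : Type) [CommRing k] (C : EICat) (i : ℕ) : CMod k C where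
  V j := C.Hom i j →₀ k
  act f := Finsupp.lmapDomain k k (fun γ => C.comp f γ)
  act_id j := by
    have h : (fun γ : C.Hom i j => C.comp (C.idm j) γ) = fun γ => γ :=
      funext fun γ => C.id_comp γ
    ext x a
    simp [Finsupp.lmapDomain, h]
  act_comp f g := by
    have h : (fun γ : C.Hom i _ => C.comp (C.comp f g) γ)
        = (fun γ => C.comp f γ) ∘ (fun γ => C.comp g γ) :=
      funext fun γ => C.assoc f g γ
    ext x a
    simp [Finsupp.lmapDomain, h, Finsupp.mapDomain_comp]

/-!
Write `G_j = C(j, j)`, `H_j` for the stabilizer of `α_{i,j}` in `G_j`, and `D_j` for the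
`H_j`-invariants of `W j`. Since `G_j` acts transitively on `C(i, j)`, Maschke's theorem shows that
`W j` is spanned by the `G_j`-translates of `D_j`. The map `v ↦ avg_{H_{j+1}} (α_j v)` sends `D_j`
into `D_{j+1}`, and for large `j` the bijectivity condition makes it injective on the
`H_j`-invariants of `k C(i, j)` and onto those of `k C(i, j + 1)`. So `dim D_j` is eventually
nondecreasing and bounded, hence eventually constant; from then on `D_{j+1}` is the image of `D_j`,
so `W (j + 1)` is generated by `W j`, and the finitely many finite-dimensional `W j` below that
point generate `W`.
-/

open Finset

theorem inv_card_smul_sum_const {k ι M : Type} [DivisionRing k] [CharZero k] [AddCommGroup M]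
    [Module k M] {s : Finset ι} (hs : s.Nonempty) (v : M) :
    ((#s : ℕ) : k)⁻¹ • ∑ _a ∈ s, v = v := by
  rw [sum_const, ← Nat.cast_smul_eq_nsmul k, smul_smul,
    inv_mul_cancel₀ (Nat.cast_ne_zero.2 hs.card_pos.ne'), one_smul]

theorem Submodule.finrank_map_eq_of_injOn {K V V' : Type} [Field K] [AddCommGroup V]
    [Module K V] [AddCommGroup V'] [Module K V'] (f : V →ₗ[K] V') {p : Submodule K V}
    (hf : ∀ v ∈ p, f v = 0 → v = 0) : Module.finrank K (p.map f) = Module.finrank K p := by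
  have hinj : Function.Injective (f.domRestrict p) := by
    rw [← LinearMap.ker_eq_bot, LinearMap.ker_eq_bot']
    exact fun v hv => Subtype.ext (hf v v.2 hv)
  rw [← LinearMap.range_domRestrict, LinearMap.finrank_range_of_inj hinj]

theorem Nat.exists_forall_ge_succ_le (F : ℕ → ℕ) {N B : ℕ} (hmono : ∀ j ≥ N, F j ≤ F (j + 1))
    (hB : ∀ j ≥ N, F j ≤ B) : ∃ n, ∀ j ≥ n, F (j + 1) ≤ F j := by
  have hbdd : BddAbove (F '' Set.Ici N) := ⟨B, Set.forall_mem_image.2 hB⟩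
  obtain ⟨n, hn, hmax⟩ := Nat.sSup_mem (Set.nonempty_Ici.image F) hbdd
  have hn : N ≤ n := hn
  refine ⟨n, fun j hj => ?_⟩
  calc F (j + 1) ≤ sSup (F '' Set.Ici N) := le_csSup hbdd ⟨j + 1, by grind, rfl⟩
    _ = F n := hmax.symm
    _ ≤ F j := Nat.le_induction le_rfl (fun l hnl ih => ih.trans (hmono l (hn.trans hnl))) j hj

namespace CMod

variable {k : Type} [CommRing k] {C : EICat} {M : CMod k C}

theorem subFG_of_finite {W : ∀ j, Submodule k (M.V j)} {ι : Type} [Finite ι] (d : ι → ℕ)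
    (v : ∀ a, M.V (d a)) (hv : ∀ a, v a ∈ W (d a))
    (hgen : ∀ W', M.Closed W' → (∀ a, v a ∈ W' (d a)) → ∀ j, W j ≤ W' j) : M.SubFG W := by
  obtain ⟨n, ⟨e⟩⟩ := Finite.exists_equiv_fin ι
  refine ⟨n, d ∘ e.symm, fun m => v (e.symm m), fun m => hv _, fun W' hW' h => hgen W' hW' ?_⟩
  intro a
  obtain ⟨m, rfl⟩ := e.symm.surjective a
  exact h m

theorem subFG_of_le_span_act [∀ j, IsNoetherian k (M.V j)] {W : ∀ j, Submodule k (M.V j)}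
    {n : ℕ} (hn : ∀ j ≥ n, W (j + 1) ≤ Submodule.span k
      {x | ∃ (β : C.Hom j (j + 1)) (w : M.V j), w ∈ W j ∧ x = M.act β w}) : M.SubFG W := by
  choose s hs using fun j => IsNoetherian.noetherian (W j)
  refine subFG_of_finite (ι := Σ j : Fin (n + 1), s j) (fun a => a.1) (fun a => a.2.1)
    (fun a => hs a.1 ▸ Submodule.subset_span a.2.2) fun W' hW' hgen => ?_
  have hle : ∀ j ≤ n, W j ≤ W' j := fun j hj =>
    hs j ▸ Submodule.span_le.2 fun x hx => hgen ⟨⟨j, Nat.lt_succ_of_le hj⟩, x, hx⟩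
  intro j
  rcases le_total j n with hj | hj
  · exact hle j hj
  induction j, hj using Nat.le_induction with
  | base => exact hle n le_rfl
  | succ j hj ih =>
    refine (hn j hj).trans (Submodule.span_le.2 ?_)
    rintro _ ⟨β, w, hw, rfl⟩
    exact hW' j (j + 1) β w (ih hw)

end CMod

namespace EICat

variable {C : EICat}

instance (i j : ℕ) : Finite (C.Hom i j) := C.homFinite i j

noncomputable instance (i j : ℕ) : Fintype (C.Hom i j) := Fintype.ofFinite _

noncomputable def inv (C : EICat) {m : ℕ} (g : C.Hom m m) : C.Hom m m :=
  (C.ei m g).choose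

theorem comp_inv {m : ℕ} (g : C.Hom m m) : C.comp g (C.inv g) = C.idm m :=
  (C.ei m g).choose_spec.1

theorem inv_comp {m : ℕ} (g : C.Hom m m) : C.comp (C.inv g) g = C.idm m :=
  (C.ei m g).choose_spec.2

theorem inv_comp_cancel_left {i m : ℕ} (g : C.Hom m m) (γ : C.Hom i m) :
    C.comp (C.inv g) (C.comp g γ) = γ := by
  rw [← C.assoc, inv_comp, C.id_comp]

theorem comp_inv_cancel_left {i m : ℕ} (g : C.Hom m m) (γ : C.Hom i m) :
    C.comp g (C.comp (C.inv g) γ) = γ := by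
  rw [← C.assoc, comp_inv, C.id_comp]

theorem comp_left_injective {i m : ℕ} (g : C.Hom m m) :
    Function.Injective (C.comp g : C.Hom i m → C.Hom i m) := fun a b hab => by
  rw [← inv_comp_cancel_left g a, hab, inv_comp_cancel_left]

theorem inv_comp_comp {m : ℕ} (g₀ g : C.Hom m m) :
    C.comp (C.inv (C.comp g₀ g)) g₀ = C.inv g :=
  calc C.comp (C.inv (C.comp g₀ g)) g₀
      = C.comp (C.comp (C.comp (C.inv (C.comp g₀ g)) g₀) g) (C.inv g) := by
        rw [C.assoc _ g, comp_inv, C.comp_id]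
    _ = C.inv g := by rw [C.assoc _ g₀, inv_comp, C.id_comp]

theorem IsIso.le {i j : ℕ} {f : C.Hom i j} (hf : C.IsIso f) : j ≤ i :=
  (C.nonempty_iff j i).1 ⟨hf.choose⟩

theorem isIso_of_endo {m : ℕ} (g : C.Hom m m) : C.IsIso g :=
  ⟨C.inv g, comp_inv g, inv_comp g⟩

theorem alph_self (α : ∀ j, C.Hom j (j + 1)) (i : ℕ) (h : i ≤ i) : C.alph α i h = C.idm i :=
  Nat.leRecOn_self _

theorem alph_succ (α : ∀ j, C.Hom j (j + 1)) {i j : ℕ} (h : i ≤ j) (h' : i ≤ j + 1) :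
    C.alph α i h' = C.comp (α j) (C.alph α i h) :=
  Nat.leRecOn_succ h _

/-- For `i < j`, `f` is neither invertible nor unfactorizable, so it splits through some `l` with
`i < l ≤ j`; recurse on the left factor. -/
theorem TypeAInf.exists_comp_eq (hA : C.TypeAInf) {i j : ℕ} (hij : i ≤ j)
    (f : C.Hom i (j + 1)) : ∃ (β : C.Hom j (j + 1)) (γ : C.Hom i j), f = C.comp β γ := by
  rcases hij.eq_or_lt with rfl | hlt
  · exact ⟨f, C.idm i, (C.comp_id f).symm⟩
  have hfactor : ¬ C.Unfact f := fun hu => by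
    have := (hA i (j + 1)).1 ⟨f, hu⟩
    omega
  simp only [Unfact, not_and_or, not_not, not_forall, not_or] at hfactor
  rcases hfactor with hiso | ⟨l, b₂, b₁, hf, hb₁, hb₂⟩
  · have := hiso.le
    omega
  have hl : l ≤ j + 1 := (C.nonempty_iff l (j + 1)).1 ⟨b₁⟩
  have hil : i ≤ l := (C.nonempty_iff i l).1 ⟨b₂⟩
  have hlj : l ≤ j := by
    rcases hl.eq_or_lt with rfl | h
    · exact absurd (isIso_of_endo b₁) hb₁
    · omega
  have hil' : i < l := by
    rcases hil.eq_or_lt with rfl | h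
    · exact absurd (isIso_of_endo b₂) hb₂
    · exact h
  obtain ⟨β, γ, rfl⟩ := hA.exists_comp_eq hlj b₁
  exact ⟨β, C.comp γ b₂, by rw [hf, C.assoc]⟩
termination_by j - i

theorem exists_comp_alph_eq (hA : C.TypeAInf) (hT : C.TransCond) (α : ∀ j, C.Hom j (j + 1))
    {i : ℕ} : ∀ {m : ℕ} (him : i ≤ m) (γ : C.Hom i m),
      ∃ g : C.Hom m m, C.comp g (C.alph α i him) = γ
  | m, him, γ => by
    rcases him.eq_or_lt with rfl | hlt
    · exact ⟨γ, by rw [alph_self, C.comp_id]⟩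
    obtain ⟨m, rfl⟩ : ∃ m', m = m' + 1 := ⟨m - 1, by omega⟩
    have him' : i ≤ m := by omega
    obtain ⟨β, γ', rfl⟩ := hA.exists_comp_eq him' γ
    obtain ⟨g', rfl⟩ := exists_comp_alph_eq hA hT α him' γ'
    obtain ⟨e, rfl⟩ := hT m (α m) β
    obtain ⟨e', he'⟩ := hT m (α m) (C.comp (α m) g')
    refine ⟨C.comp e e', ?_⟩
    rw [alph_succ α him' him, C.assoc, ← C.assoc e', he', C.assoc, C.assoc]

section Stabilizer

open scoped Classical in
noncomputable def stab {i m : ℕ} (x₀ : C.Hom i m) : Finset (C.Hom m m) :=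
  {h | C.comp h x₀ = x₀}

theorem mem_stab {i m : ℕ} {x₀ : C.Hom i m} {h : C.Hom m m} :
    h ∈ C.stab x₀ ↔ C.comp h x₀ = x₀ := by
  simp [stab]

theorem idm_mem_stab {i m : ℕ} (x₀ : C.Hom i m) : C.idm m ∈ C.stab x₀ :=
  mem_stab.2 (C.id_comp x₀)

theorem stab_nonempty {i m : ℕ} (x₀ : C.Hom i m) : (C.stab x₀).Nonempty :=
  ⟨_, idm_mem_stab x₀⟩

theorem comp_mem_stab {i m : ℕ} {x₀ : C.Hom i m} {h₁ h₂ : C.Hom m m}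
    (h₁_mem : h₁ ∈ C.stab x₀) (h₂_mem : h₂ ∈ C.stab x₀) : C.comp h₁ h₂ ∈ C.stab x₀ := by
  rw [mem_stab] at *
  rw [C.assoc, h₂_mem, h₁_mem]

theorem inv_mem_stab {i m : ℕ} {x₀ : C.Hom i m} {h : C.Hom m m} (h_mem : h ∈ C.stab x₀) :
    C.inv h ∈ C.stab x₀ := by
  rw [mem_stab] at *
  conv_lhs => rw [← h_mem]
  exact inv_comp_cancel_left h x₀

theorem sum_stab_comp_right {M : Type} [AddCommMonoid M] {i m : ℕ} {x₀ : C.Hom i m}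
    {h₀ : C.Hom m m} (h₀_mem : h₀ ∈ C.stab x₀) (F : C.Hom m m → M) :
    ∑ h ∈ C.stab x₀, F (C.comp h h₀) = ∑ h ∈ C.stab x₀, F h :=
  sum_nbij' (fun h => C.comp h h₀) (fun h => C.comp h (C.inv h₀))
    (fun _ h_mem => comp_mem_stab h_mem h₀_mem)
    (fun _ h_mem => comp_mem_stab h_mem (inv_mem_stab h₀_mem))
    (fun h _ => by rw [C.assoc, comp_inv, C.comp_id])
    (fun h _ => by rw [C.assoc, inv_comp, C.comp_id]) fun _ _ => rfl

theorem sum_stab_comp_left {M : Type} [AddCommMonoid M] {i m : ℕ} {x₀ : C.Hom i m}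
    {h₀ : C.Hom m m} (h₀_mem : h₀ ∈ C.stab x₀) (F : C.Hom m m → M) :
    ∑ h ∈ C.stab x₀, F (C.comp h₀ h) = ∑ h ∈ C.stab x₀, F h :=
  sum_nbij' (C.comp h₀) (C.comp (C.inv h₀))
    (fun _ h_mem => comp_mem_stab h₀_mem h_mem)
    (fun _ h_mem => comp_mem_stab (inv_mem_stab h₀_mem) h_mem)
    (fun h _ => inv_comp_cancel_left h₀ h) (fun h _ => comp_inv_cancel_left h₀ h) fun _ _ => rfl

end Stabilizer

section Lcomp

variable (k : Type) [CommRing k]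

noncomputable def lcomp {i j l : ℕ} (β : C.Hom j l) : (C.Hom i j →₀ k) →ₗ[k] (C.Hom i l →₀ k) :=
  Finsupp.lmapDomain k k (C.comp β)

def AutStable {i m : ℕ} (W : Submodule k (C.Hom i m →₀ k)) : Prop :=
  ∀ g : C.Hom m m, ∀ w ∈ W, C.lcomp k g w ∈ W

def invariants {i m : ℕ} (x₀ : C.Hom i m) : Submodule k (C.Hom i m →₀ k) where
  carrier := {v | ∀ h ∈ C.stab x₀, C.lcomp k h v = v}
  add_mem' ha hb h h_mem := by rw [map_add, ha h h_mem, hb h h_mem]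
  zero_mem' h _ := map_zero _
  smul_mem' c _ ha h h_mem := by rw [map_smul, ha h h_mem]

variable {k}

theorem lcomp_single {i j l : ℕ} (β : C.Hom j l) (γ : C.Hom i j) (c : k) :
    C.lcomp k β (Finsupp.single γ c) = Finsupp.single (C.comp β γ) c :=
  Finsupp.mapDomain_single

theorem lcomp_lcomp {i j l m : ℕ} (f : C.Hom l m) (g : C.Hom j l) (v : C.Hom i j →₀ k) :
    C.lcomp k f (C.lcomp k g v) = C.lcomp k (C.comp f g) v := by
  simp only [lcomp, Finsupp.lmapDomain_apply, ← Finsupp.mapDomain_comp]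
  congr 1
  exact funext fun γ => (C.assoc f g γ).symm

theorem lcomp_idm {i m : ℕ} (v : C.Hom i m →₀ k) : C.lcomp k (C.idm m) v = v := by
  rw [lcomp, Finsupp.lmapDomain_apply, show C.comp (C.idm m) = (id : C.Hom i m → C.Hom i m) from
    funext C.id_comp, Finsupp.mapDomain_id]

theorem lcomp_apply_comp {i m : ℕ} (g : C.Hom m m) (v : C.Hom i m →₀ k) (γ : C.Hom i m) :
    C.lcomp k g v (C.comp g γ) = v γ :=
  Finsupp.mapDomain_apply (comp_left_injective g) v γ

open scoped Classical in
theorem lcomp_apply_eq_card_smul {i j l : ℕ} (β : C.Hom j l) (v : C.Hom i j →₀ k)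
    (δ : C.Hom i l) {c : k} (hc : ∀ γ, C.comp β γ = δ → v γ = c) :
    C.lcomp k β v δ = #{γ | C.comp β γ = δ} • c := by
  have hsum : C.lcomp k β v δ = ∑ γ with C.comp β γ = δ, v γ := by
    simp [lcomp, Finsupp.mapDomain, Finsupp.sum_fintype, Finsupp.single_apply, sum_ite]
  rw [hsum, sum_congr rfl fun γ hγ => hc γ (mem_filter.1 hγ).2, sum_const]

end Lcomp

section Average

variable (k : Type) [Field k]

noncomputable def stabAvg {i m : ℕ} (x₀ : C.Hom i m) :
    (C.Hom i m →₀ k) →ₗ[k] (C.Hom i m →₀ k) :=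
  ((#(C.stab x₀) : ℕ) : k)⁻¹ • ∑ h ∈ C.stab x₀, C.lcomp k h

variable {k}

theorem stabAvg_apply {i m : ℕ} (x₀ : C.Hom i m) (v : C.Hom i m →₀ k) :
    C.stabAvg k x₀ v = ((#(C.stab x₀) : ℕ) : k)⁻¹ • ∑ h ∈ C.stab x₀, C.lcomp k h v := by
  simp [stabAvg, LinearMap.sum_apply]

theorem stabAvg_lcomp_of_mem {i m : ℕ} {x₀ : C.Hom i m} {h₀ : C.Hom m m}
    (h₀_mem : h₀ ∈ C.stab x₀) (v : C.Hom i m →₀ k) :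
    C.stabAvg k x₀ (C.lcomp k h₀ v) = C.stabAvg k x₀ v := by
  simp only [stabAvg_apply, lcomp_lcomp]
  rw [sum_stab_comp_right h₀_mem fun h => C.lcomp k h v]

theorem lcomp_stabAvg_of_mem {i m : ℕ} {x₀ : C.Hom i m} {h₀ : C.Hom m m}
    (h₀_mem : h₀ ∈ C.stab x₀) (v : C.Hom i m →₀ k) :
    C.lcomp k h₀ (C.stabAvg k x₀ v) = C.stabAvg k x₀ v := by
  simp only [stabAvg_apply, map_smul, map_sum, lcomp_lcomp]
  rw [sum_stab_comp_left h₀_mem fun h => C.lcomp k h v]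

theorem stabAvg_mem_invariants {i m : ℕ} (x₀ : C.Hom i m) (v : C.Hom i m →₀ k) :
    C.stabAvg k x₀ v ∈ C.invariants k x₀ :=
  fun _ h_mem => lcomp_stabAvg_of_mem h_mem v

theorem finrank_map_stabAvg_le_invariants {i m : ℕ} (x₀ : C.Hom i m)
    (W : Submodule k (C.Hom i m →₀ k)) :
    Module.finrank k (W.map (C.stabAvg k x₀)) ≤ Module.finrank k (C.invariants k x₀) :=
  Submodule.finrank_mono <| Submodule.map_le_iff_le_comap.2 fun w _ => stabAvg_mem_invariants x₀ w

theorem AutStable.stabAvg_mem {i m : ℕ} {W : Submodule k (C.Hom i m →₀ k)}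
    (hW : C.AutStable k W) (x₀ : C.Hom i m) {v : C.Hom i m →₀ k} (hv : v ∈ W) :
    C.stabAvg k x₀ v ∈ W := by
  rw [stabAvg_apply]
  exact W.smul_mem _ (W.sum_mem fun h _ => hW h v hv)

theorem lcomp_comm_stabAvg {i m : ℕ} {P : (C.Hom i m →₀ k) →ₗ[k] (C.Hom i m →₀ k)}
    (hP : ∀ g v, P (C.lcomp k g v) = C.lcomp k g (P v)) (x₀ : C.Hom i m) (v : C.Hom i m →₀ k) :
    P (C.stabAvg k x₀ v) = C.stabAvg k x₀ (P v) := by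
  simp only [stabAvg_apply, map_smul, map_sum, hP]

variable [CharZero k]

theorem stabAvg_eq_self {i m : ℕ} {x₀ : C.Hom i m} {v : C.Hom i m →₀ k}
    (hv : v ∈ C.invariants k x₀) : C.stabAvg k x₀ v = v := by
  rw [stabAvg_apply, sum_congr rfl hv, inv_card_smul_sum_const (stab_nonempty x₀)]

theorem stabAvg_apply_self {i m : ℕ} (x₀ : C.Hom i m) (v : C.Hom i m →₀ k) :
    C.stabAvg k x₀ v x₀ = v x₀ := by
  rw [stabAvg_apply, Finsupp.smul_apply, Finsupp.finsetSum_apply]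
  have hfix : ∀ h ∈ C.stab x₀, C.lcomp k h v x₀ = v x₀ := fun h h_mem => by
    conv_lhs => rw [← mem_stab.1 h_mem]
    exact lcomp_apply_comp h v x₀
  rw [sum_congr rfl hfix, inv_card_smul_sum_const (stab_nonempty x₀)]

end Average

section Maschke

variable {k : Type} [Field k] [CharZero k]

/-- Maschke: average an arbitrary projection onto `U` over `G_m`. -/
theorem AutStable.exists_isProj_equivariant {i m : ℕ} {U : Submodule k (C.Hom i m →₀ k)}
    (hU : C.AutStable k U) :
    ∃ P : (C.Hom i m →₀ k) →ₗ[k] (C.Hom i m →₀ k),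
      LinearMap.IsProj U P ∧ ∀ g v, P (C.lcomp k g v) = C.lcomp k g (P v) := by
  obtain ⟨q, hq⟩ := U.exists_isCompl
  set p := U.projection q hq
  set P : (C.Hom i m →₀ k) →ₗ[k] (C.Hom i m →₀ k) :=
    ((#(univ : Finset (C.Hom m m)) : ℕ) : k)⁻¹ •
      ∑ g : C.Hom m m, C.lcomp k g ∘ₗ p ∘ₗ C.lcomp k (C.inv g)
  have hP_apply : ∀ v, P v = ((#(univ : Finset (C.Hom m m)) : ℕ) : k)⁻¹ •
      ∑ g : C.Hom m m, C.lcomp k g (p (C.lcomp k (C.inv g) v)) := fun v => by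
    simp [P, LinearMap.sum_apply]
  refine ⟨P, ⟨fun v => ?_, fun u hu => ?_⟩, fun g₀ v => ?_⟩
  · rw [hP_apply]
    exact U.smul_mem _ (U.sum_mem fun g _ => hU g _ (U.projection_apply_mem hq _))
  · have hfix : ∀ g : C.Hom m m, C.lcomp k g (p (C.lcomp k (C.inv g) u)) = u := fun g => by
      rw [Submodule.projection_apply_of_mem_left hq (hU _ _ hu), lcomp_lcomp, comp_inv, lcomp_idm]
    rw [hP_apply, sum_congr rfl fun g _ => hfix g, inv_card_smul_sum_const ⟨C.idm m, mem_univ _⟩]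
  · have hbij : Function.Bijective (C.comp g₀ : C.Hom m m → C.Hom m m) :=
      Finite.injective_iff_bijective.1 (comp_left_injective g₀)
    rw [hP_apply, hP_apply, map_smul, map_sum, ← hbij.sum_comp]
    simp only [lcomp_lcomp, inv_comp_comp]

theorem AutStable.le_span_lcomp_stabAvg {i m : ℕ} {x₀ : C.Hom i m}
    (htrans : ∀ γ : C.Hom i m, ∃ g : C.Hom m m, C.comp g x₀ = γ)
    {W : Submodule k (C.Hom i m →₀ k)} (hW : C.AutStable k W) :
    W ≤ Submodule.span k {x | ∃ (g : C.Hom m m) (w : C.Hom i m →₀ k),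
      w ∈ W ∧ x = C.lcomp k g (C.stabAvg k x₀ w)} := by
  set U := Submodule.span k {x | ∃ (g : C.Hom m m) (w : C.Hom i m →₀ k),
    w ∈ W ∧ x = C.lcomp k g (C.stabAvg k x₀ w)}
  have hUW : U ≤ W :=
    Submodule.span_le.2 fun _ ⟨g, w, hw, hx⟩ => hx ▸ hW g _ (hW.stabAvg_mem x₀ hw)
  have hU : C.AutStable k U := fun g u hu => by
    induction hu using Submodule.span_induction with
    | mem x hx =>
      obtain ⟨g', w, hw, rfl⟩ := hx
      rw [lcomp_lcomp]
      exact Submodule.subset_span ⟨C.comp g g', w, hw, rfl⟩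
    | zero => simp
    | add x y _ _ hx hy => rw [map_add]; exact U.add_mem hx hy
    | smul c x _ hx => rw [map_smul]; exact U.smul_mem c hx
  obtain ⟨P, hPU, hP⟩ := hU.exists_isProj_equivariant
  intro w hw
  -- `r` lies in `W` and is killed by `P`; its `H`-averaged translates lie in `U`, so they vanish,
  -- and their coefficients at `x₀` are the coefficients of `r`.
  set r := w - P w
  have hr : P r = 0 := by rw [map_sub, hPU.map_id _ (hPU.map_mem w), sub_self]
  have hr0 : r = 0 := by
    ext γ
    obtain ⟨g, rfl⟩ := htrans γ
    set u := C.stabAvg k x₀ (C.lcomp k (C.inv g) r)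
    have hu : u ∈ U := Submodule.subset_span
      ⟨C.idm m, C.lcomp k (C.inv g) r, hW _ _ (W.sub_mem hw (hUW (hPU.map_mem w))),
        (lcomp_idm _).symm⟩
    have hu0 : u = 0 := by
      rw [← hPU.map_id u hu, lcomp_comm_stabAvg hP, hP, hr, map_zero, map_zero]
    have := congrArg (· x₀) hu0
    simp only [u, stabAvg_apply_self, Finsupp.coe_zero, Pi.zero_apply] at this
    rwa [← inv_comp_cancel_left g x₀, lcomp_apply_comp] at this
  rw [show w = P w from sub_eq_zero.1 hr0]
  exact hPU.map_mem w

end Maschke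

section Transfer

variable (k : Type) [Field k]

/-- The linearization `v ↦ avg_{H_{i,j+1}} (α_j v)` of `μ_{i,j}`: it maps the `H_{i,j}`-orbit sum
of `O` to a positive multiple of the `H_{i,j+1}`-orbit sum of `μ_{i,j} O`. -/
noncomputable def transfer (α : ∀ j, C.Hom j (j + 1)) {i j : ℕ} (hij : i ≤ j) :
    (C.Hom i j →₀ k) →ₗ[k] (C.Hom i (j + 1) →₀ k) :=
  C.stabAvg k (C.comp (α j) (C.alph α i hij)) ∘ₗ C.lcomp k (α j)

variable {k} (α : ∀ j, C.Hom j (j + 1)) {i j : ℕ} (hij : i ≤ j)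

theorem transfer_apply (v : C.Hom i j →₀ k) :
    C.transfer k α hij v = C.stabAvg k (C.comp (α j) (C.alph α i hij)) (C.lcomp k (α j) v) :=
  rfl

theorem TransCond.exists_mem_stab_comp_eq (hT : C.TransCond) {h : C.Hom j j}
    (h_mem : h ∈ C.stab (C.alph α i hij)) :
    ∃ h' ∈ C.stab (C.comp (α j) (C.alph α i hij)), C.comp (α j) h = C.comp h' (α j) := by
  obtain ⟨e, he⟩ := hT j (α j) (C.comp (α j) h)
  refine ⟨e, mem_stab.2 ?_, he.symm⟩
  rw [← C.assoc, he, C.assoc, mem_stab.1 h_mem]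

variable [CharZero k]

theorem TransCond.transfer_stabAvg (hT : C.TransCond) (v : C.Hom i j →₀ k) :
    C.transfer k α hij (C.stabAvg k (C.alph α i hij) v) = C.transfer k α hij v := by
  have hconst : ∀ h ∈ C.stab (C.alph α i hij),
      C.transfer k α hij (C.lcomp k h v) = C.transfer k α hij v := fun h h_mem => by
    obtain ⟨h', h'_mem, hcomm⟩ := hT.exists_mem_stab_comp_eq α hij h_mem
    rw [transfer_apply, transfer_apply, lcomp_lcomp, hcomm, ← lcomp_lcomp,
      stabAvg_lcomp_of_mem h'_mem]
  rw [stabAvg_apply, map_smul, map_sum, sum_congr rfl hconst,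
    inv_card_smul_sum_const (stab_nonempty _)]

theorem TransCond.map_transfer_map_stabAvg_le (hT : C.TransCond)
    {W₁ : Submodule k (C.Hom i j →₀ k)} {W₂ : Submodule k (C.Hom i (j + 1) →₀ k)}
    (hW : ∀ w ∈ W₁, C.lcomp k (α j) w ∈ W₂) :
    (W₁.map (C.stabAvg k (C.alph α i hij))).map (C.transfer k α hij)
      ≤ W₂.map (C.stabAvg k (C.comp (α j) (C.alph α i hij))) := by
  rintro _ ⟨_, ⟨w, hw, rfl⟩, rfl⟩
  exact ⟨C.lcomp k (α j) w, hW w hw, (hT.transfer_stabAvg α hij w).symm⟩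

theorem TransCond.invariants_le_map_transfer (hT : C.TransCond)
    (hsurj : ∀ δ : C.Hom i (j + 1), ∃ γ : C.Hom i j, C.orbRelS α hij (C.comp (α j) γ) δ) :
    C.invariants k (C.comp (α j) (C.alph α i hij))
      ≤ (C.invariants k (C.alph α i hij)).map (C.transfer k α hij) := by
  have hrange : ∀ u, C.stabAvg k (C.comp (α j) (C.alph α i hij)) u
      ∈ (C.invariants k (C.alph α i hij)).map (C.transfer k α hij) := by
    intro u
    induction u using Finsupp.induction_linear with
    | zero => simp
    | add u₁ u₂ hu₁ hu₂ => rw [map_add]; exact Submodule.add_mem _ hu₁ hu₂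
    | single δ c =>
      obtain ⟨γ, h', h'_mem, rfl⟩ := hsurj δ
      refine ⟨C.stabAvg k (C.alph α i hij) (Finsupp.single γ c), stabAvg_mem_invariants _ _, ?_⟩
      rw [hT.transfer_stabAvg, transfer_apply, lcomp_single,
        ← stabAvg_lcomp_of_mem (mem_stab.2 h'_mem), lcomp_single]
  exact fun u hu => stabAvg_eq_self hu ▸ hrange u

/-- Injectivity of `μ_{i,j}`: every `γ` with `h' α_j γ = α_j γ₀`, `h' ∈ H_{i,j+1}`, lies in the
`H_{i,j}`-orbit of `γ₀`, so on invariants the coefficient of `transfer v` at `α_j γ₀` is a positive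
multiple of `v γ₀`. -/
theorem transfer_injOn
    (hinj : ∀ γ γ' : C.Hom i j,
      C.orbRelS α hij (C.comp (α j) γ) (C.comp (α j) γ') → C.orbRel α hij γ γ')
    {v : C.Hom i j →₀ k} (hv : v ∈ C.invariants k (C.alph α i hij))
    (h0 : C.transfer k α hij v = 0) : v = 0 := by
  classical
  ext γ₀
  have hcoeff : ∀ h' ∈ C.stab (C.comp (α j) (C.alph α i hij)),
      C.lcomp k h' (C.lcomp k (α j) v) (C.comp (α j) γ₀)
        = #{γ | C.comp (C.comp h' (α j)) γ = C.comp (α j) γ₀} • v γ₀ := fun h' h'_mem => by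
    rw [lcomp_lcomp]
    refine lcomp_apply_eq_card_smul _ _ _ fun γ hγ => ?_
    obtain ⟨h, h_mem, rfl⟩ := hinj γ γ₀ ⟨h', mem_stab.1 h'_mem, by rw [← C.assoc, hγ]⟩
    rw [← lcomp_apply_comp h v γ, hv h (mem_stab.2 h_mem)]
  have hpos : 0 < ∑ h' ∈ C.stab (C.comp (α j) (C.alph α i hij)),
      #{γ | C.comp (C.comp h' (α j)) γ = C.comp (α j) γ₀} :=
    sum_pos' (fun _ _ => Nat.zero_le _)
      ⟨C.idm _, idm_mem_stab _, card_pos.2 ⟨γ₀, by simp [C.id_comp]⟩⟩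
  have h0' := congrArg (· (C.comp (α j) γ₀)) h0
  simp only [transfer_apply, stabAvg_apply, Finsupp.smul_apply, Finsupp.finsetSum_apply,
    Finsupp.coe_zero, Pi.zero_apply] at h0'
  rw [sum_congr rfl hcoeff, ← sum_smul, smul_eq_zero, smul_eq_zero] at h0'
  simpa [hpos.ne', (stab_nonempty _).ne_empty] using h0'

theorem finrank_map_stabAvg_le_succ (hT : C.TransCond)
    (hinj : ∀ γ γ' : C.Hom i j,
      C.orbRelS α hij (C.comp (α j) γ) (C.comp (α j) γ') → C.orbRel α hij γ γ')
    {W₁ : Submodule k (C.Hom i j →₀ k)} {W₂ : Submodule k (C.Hom i (j + 1) →₀ k)}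
    (hW : ∀ w ∈ W₁, C.lcomp k (α j) w ∈ W₂) :
    Module.finrank k (W₁.map (C.stabAvg k (C.alph α i hij)))
      ≤ Module.finrank k (W₂.map (C.stabAvg k (C.comp (α j) (C.alph α i hij)))) := by
  rw [← Submodule.finrank_map_eq_of_injOn (C.transfer k α hij) ?_]
  · exact Submodule.finrank_mono (hT.map_transfer_map_stabAvg_le α hij hW)
  rintro _ ⟨w, -, rfl⟩
  exact transfer_injOn α hij hinj (stabAvg_mem_invariants _ w)

theorem finrank_invariants_succ_le (hT : C.TransCond)
    (hsurj : ∀ δ : C.Hom i (j + 1), ∃ γ : C.Hom i j, C.orbRelS α hij (C.comp (α j) γ) δ) :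
    Module.finrank k (C.invariants k (C.comp (α j) (C.alph α i hij)))
      ≤ Module.finrank k (C.invariants k (C.alph α i hij)) :=
  (Submodule.finrank_mono (hT.invariants_le_map_transfer α hij hsurj)).trans
    (Submodule.finrank_map_le _ _)

/-- Once the invariants of `W` stop growing, `transfer` maps those of `W j` onto those of
`W (j + 1)`, and these generate `W (j + 1)` by Maschke. -/
theorem le_span_lcomp_of_finrank_le (hA : C.TypeAInf) (hT : C.TransCond)
    (hinj : ∀ γ γ' : C.Hom i j,
      C.orbRelS α hij (C.comp (α j) γ) (C.comp (α j) γ') → C.orbRel α hij γ γ')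
    {W₁ : Submodule k (C.Hom i j →₀ k)} {W₂ : Submodule k (C.Hom i (j + 1) →₀ k)}
    (hW₁ : C.AutStable k W₁) (hW₂ : C.AutStable k W₂) (hW : ∀ w ∈ W₁, C.lcomp k (α j) w ∈ W₂)
    (hrank : Module.finrank k (W₂.map (C.stabAvg k (C.comp (α j) (C.alph α i hij))))
      ≤ Module.finrank k (W₁.map (C.stabAvg k (C.alph α i hij)))) :
    W₂ ≤ Submodule.span k
      {x | ∃ (β : C.Hom j (j + 1)) (w : C.Hom i j →₀ k), w ∈ W₁ ∧ x = C.lcomp k β w} := by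
  have hij' : i ≤ j + 1 := hij.trans j.le_succ
  have htrans : ∀ δ : C.Hom i (j + 1), ∃ g, C.comp g (C.comp (α j) (C.alph α i hij)) = δ := by
    simpa only [alph_succ α hij hij'] using exists_comp_alph_eq hA hT α hij'
  have hD : W₂.map (C.stabAvg k (C.comp (α j) (C.alph α i hij)))
      = (W₁.map (C.stabAvg k (C.alph α i hij))).map (C.transfer k α hij) := by
    refine (Submodule.eq_of_le_of_finrank_le (hT.map_transfer_map_stabAvg_le α hij hW) ?_).symm
    rw [Submodule.finrank_map_eq_of_injOn (C.transfer k α hij)]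
    · exact hrank
    rintro _ ⟨w, -, rfl⟩
    exact transfer_injOn α hij hinj (stabAvg_mem_invariants _ w)
  refine (hW₂.le_span_lcomp_stabAvg htrans).trans (Submodule.span_le.2 ?_)
  rintro _ ⟨g, w, hw, rfl⟩
  obtain ⟨_, ⟨d, hd, rfl⟩, hdw⟩ : C.stabAvg k (C.comp (α j) (C.alph α i hij)) w ∈ _ :=
    hD ▸ Submodule.mem_map_of_mem hw
  rw [← hdw, transfer_apply, stabAvg_apply, map_smul, map_sum]
  refine Submodule.smul_mem _ _ (Submodule.sum_mem _ fun h _ => ?_)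
  rw [lcomp_lcomp, lcomp_lcomp]
  exact Submodule.subset_span ⟨_, _, hW₁.stabAvg_mem _ hd, rfl⟩

end Transfer

theorem eventually_le_span_lcomp {k : Type} [Field k] [CharZero k] (hA : C.TypeAInf)
    (hT : C.TransCond) (α : ∀ j, C.Hom j (j + 1)) (hB : C.BijCond α) {i : ℕ}
    {W : ∀ j, Submodule k ((Mfree k C i).V j)} (hW : (Mfree k C i).Closed W) :
    ∃ n, ∀ j ≥ n, W (j + 1) ≤ Submodule.span k
      {x | ∃ (β : C.Hom j (j + 1)) (w : C.Hom i j →₀ k), w ∈ W j ∧ x = C.lcomp k β w} := by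
  obtain ⟨N, hN⟩ := hB i
  have hstable : ∀ m, C.AutStable k (W m) := fun m g => hW m m g
  set F : ℕ → ℕ := fun j =>
    if h : i ≤ j then Module.finrank k ((W j).map (C.stabAvg k (C.alph α i h))) else 0
  set E : ℕ → ℕ := fun j =>
    if h : i ≤ j then Module.finrank k (C.invariants k (C.alph α i h)) else 0
  have hF : ∀ j ≥ max N i, F j ≤ F (j + 1) := fun j hj => by
    have hij : i ≤ j := le_of_max_le_right hj
    simp only [F, dif_pos hij, dif_pos (hij.trans j.le_succ)]
    rw [alph_succ α hij]
    exact finrank_map_stabAvg_le_succ α hij hT (hN j hij (le_of_max_le_left hj)).1 (hW j _ (α j))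
  have hE : ∀ j ≥ max N i, E (j + 1) ≤ E j := fun j hj => by
    have hij : i ≤ j := le_of_max_le_right hj
    simp only [E, dif_pos hij, dif_pos (hij.trans j.le_succ)]
    rw [alph_succ α hij]
    exact finrank_invariants_succ_le α hij hT (hN j hij (le_of_max_le_left hj)).2
  have hFE : ∀ j ≥ max N i, F j ≤ E (max N i) := fun j hj => by
    have hEj : E j ≤ E (max N i) := Nat.le_induction (P := fun j _ => E j ≤ E (max N i)) le_rfl
      (fun l hl ih => (hE l hl).trans ih) j hj
    refine le_trans ?_ hEj
    simp only [F, E, dif_pos (le_of_max_le_right hj)]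
    exact finrank_map_stabAvg_le_invariants _ _
  obtain ⟨n, hn⟩ := Nat.exists_forall_ge_succ_le F hF hFE
  refine ⟨max n (max N i), fun j hj => ?_⟩
  have hij : i ≤ j := le_of_max_le_right (le_of_max_le_right hj)
  have hrank := hn j (le_of_max_le_left hj)
  simp only [F, dif_pos hij, dif_pos (hij.trans j.le_succ)] at hrank
  rw [alph_succ α hij] at hrank
  exact le_span_lcomp_of_finrank_le α hij hA hT
    (hN j hij (le_of_max_le_left (le_of_max_le_right hj))).1 (hstable j) (hstable (j + 1))
    (hW j _ (α j)) hrank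

end EICat

/-- under the transitivity and bijectivity conditions, over a
field `k` of characteristic 0, every `kC`-submodule of `M(i)` is finitely
generated. -/
theorem stmt_19 (k : Type) [Field k] [CharZero k]
    (C : EICat) (hA : C.TypeAInf) (hT : C.TransCond)
    (α : ∀ j, C.Hom j (j + 1)) (hB : C.BijCond α) (i : ℕ) :
    ∀ W : ∀ j, Submodule k ((Mfree k C i).V j),
      (Mfree k C i).Closed W → (Mfree k C i).SubFG W := by
  intro W hW
  have : ∀ j, IsNoetherian k ((Mfree k C i).V j) := fun j =>
    inferInstanceAs (IsNoetherian k (C.Hom i j →₀ k))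
  obtain ⟨n, hn⟩ := EICat.eventually_le_span_lcomp hA hT α hB hW
  exact CMod.subFG_of_le_span_act hn
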